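/- A generalized basilica group G = ⟨Y⟩ ≤ Aut(X*) with distinguished generating set Y is self-replicating if and only if G is generated by the directed elements of Y and G acts transitively on X. -/

import Mathlib

universe u v

/-- The automorphism group of the rooted tree `X*`: permutations of the free monoid
`List X` that preserve the prefix relation. -/
def treeAut (X : Type u) : Subgroup (Equiv.Perm (List X)) where
  carrier := {g | ∀ a b : List X, a <+: b ↔ g a <+: g b}
  one_mem' := by intro a b; simp
  mul_mem' := by
    intro g h hg hh a b
    simpa [Equiv.Perm.mul_apply] using (hh a b).trans (hg (h a) (h b))
  inv_mem' := by
    intro g hg a b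
    simpa using (hg (g⁻¹ a) (g⁻¹ b)).symm

/-- The section of `g` at the word `w`: the unique automorphism `s` satisfying
`g (w ++ v) = g w ++ s v` for all `v` (with junk value `1` if no such permutation exists). -/
noncomputable def secAt {X : Type u} (g : Equiv.Perm (List X)) (w : List X) :
    Equiv.Perm (List X) :=
  haveI := Classical.propDecidable
  if h : ∃ s : Equiv.Perm (List X), ∀ v : List X, g (w ++ v) = g w ++ s v then h.choose
  else 1

/-- The permutation of `X` induced by `g` on the first level of the tree. -/
noncomputable def perm1 {X : Type u} (g : Equiv.Perm (List X)) : Equiv.Perm X :=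
  haveI := Classical.propDecidable
  if h : ∃ σ : Equiv.Perm X, ∀ x : X, g [x] = [σ x] then h.choose else 1

/-- A permutation of `X`, viewed as a finitary automorphism of `X*` of depth (at most) one. -/
def embed1 {X : Type u} (σ : Equiv.Perm X) : Equiv.Perm (List X) where
  toFun w := match w with
    | [] => []
    | x :: vtl => σ x :: vtl
  invFun w := match w with
    | [] => []
    | x :: vtl => σ⁻¹ x :: vtl
  left_inv := by rintro (_ | ⟨x, vtl⟩) <;> simp
  right_inv := by rintro (_ | ⟨x, vtl⟩) <;> simp

/-- `G` is self-similar: all sections of elements of `G` belong to `G`. -/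
def SelfSimilarSub {X : Type u} (G : Subgroup (Equiv.Perm (List X))) : Prop :=
  ∀ g ∈ G, ∀ w : List X, secAt g w ∈ G

/-- `sec_G(v)`: the image of the pointwise stabilizer of `v` in `G` under the
section homomorphism at `v`. -/
def secImage {X : Type u} (G : Subgroup (Equiv.Perm (List X))) (v : List X) :
    Set (Equiv.Perm (List X)) :=
  {h | ∃ g ∈ G, g v = v ∧ secAt g v = h}

/-- `G` is self-replicating: self-similar, transitive on `X`, and `sec_G(x) = G`
for every `x ∈ X`. -/
def SelfReplicating {X : Type u} (G : Subgroup (Equiv.Perm (List X))) : Prop :=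
  SelfSimilarSub G ∧ (∀ x y : X, ∃ g ∈ G, g [x] = [y]) ∧
    ∀ x : X, secImage G [x] = (G : Set (Equiv.Perm (List X)))

/-- `G` is weakly self-replicating: `sec_G(v) = G` for every word `v`. -/
def WeaklySelfReplicating {X : Type u} (G : Subgroup (Equiv.Perm (List X))) : Prop :=
  ∀ v : List X, secImage G v = (G : Set (Equiv.Perm (List X)))

/-- `g` is finitary: all sections at some level are trivial. -/
def IsFinitary {X : Type u} (g : Equiv.Perm (List X)) : Prop :=
  ∃ k : ℕ, ∀ v : List X, v.length = k → secAt g v = 1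

/-- `g` is directed. -/
def IsDirectedAut {X : Type u} (g : Equiv.Perm (List X)) : Prop :=
  ∃ k : ℕ, 1 ≤ k ∧ ∃ w : List X, w.length = k ∧ secAt g w = g ∧
    ∀ v : List X, v.length = k → v ≠ w → IsFinitary (secAt g v)

/-- `g` has bounded activity. -/
def IsBoundedAut {X : Type u} (g : Equiv.Perm (List X)) : Prop :=
  ∃ N : ℕ, ∀ n : ℕ, 1 ≤ n →
    Set.ncard {v : List X | v.length = n ∧ secAt g v ≠ 1} ≤ N

/-- `g` is finite state. -/
def IsFiniteState {X : Type u} (g : Equiv.Perm (List X)) : Prop :=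
  (Set.range fun v : List X => secAt g v).Finite

/-- A bounded automata group: a finitely generated self-similar group of tree
automorphisms, all of whose elements are bounded and finite state. -/
def BoundedAutomataGroup {X : Type u} (G : Subgroup (Equiv.Perm (List X))) : Prop :=
  G ≤ treeAut X ∧ G.FG ∧ SelfSimilarSub G ∧
    ∀ g ∈ G, IsBoundedAut g ∧ IsFiniteState g

/-- An odometer: `⟨d⟩` is transitive on `X` and `d` has exactly one nontrivial
first-level section, which equals `d`. -/
def IsOdometer {X : Type u} (d : Equiv.Perm (List X)) : Prop :=
  (∀ x y : X, ∃ n : ℤ, (d ^ n) [x] = [y]) ∧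
  (∀ x : X, secAt d [x] = 1 ∨ secAt d [x] = d) ∧
  ∃! x : X, secAt d [x] = d

/-- A generalized basilica group, with distinguished generating set `Y`. -/
def GenBasilica {X : Type u} (G : Subgroup (Equiv.Perm (List X)))
    (Y : Set (Equiv.Perm (List X))) : Prop :=
  G ≤ treeAut X ∧ Y.Finite ∧ Subgroup.closure Y = G ∧
    ∀ g ∈ Y, (∀ x : X, secAt g [x] = 1) ∨
      ((∀ x : X, secAt g [x] = 1 ∨ secAt g [x] = g) ∧ ∃! x : X, secAt g [x] = g)

/-- The generating set `Y` is balanced: for each directed `g ∈ Y` with active vertex `x`,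
the least `n ≥ 1` such that `g ^ n` fixes `x` also satisfies that `g ^ n` fixes `X`
pointwise. -/
def BalancedSet {X : Type u} (Y : Set (Equiv.Perm (List X))) : Prop :=
  ∀ g ∈ Y, IsDirectedAut g → ∀ x : X, secAt g [x] = g →
    ∀ n : ℕ, 1 ≤ n → (g ^ n) [x] = [x] →
      (∀ m : ℕ, 1 ≤ m → m < n → (g ^ m) [x] ≠ [x]) →
      ∀ y : X, (g ^ n) [y] = [y]

/-- A bounded automata group in reduced form, with distinguished generating set `Y`. -/
def ReducedForm {X : Type u} (G : Subgroup (Equiv.Perm (List X)))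
    (Y : Set (Equiv.Perm (List X))) : Prop :=
  Y.Finite ∧ Subgroup.closure Y = G ∧
    ∀ g ∈ Y, (∀ x : X, secAt g [x] = 1) ∨
      ((∀ x : X, secAt g [x] = g ∨ ∃ h ∈ G, secAt g [x] = embed1 (perm1 h)) ∧
        ∃! x : X, secAt g [x] = g)

/-- A group of abelian wreath type, with distinguished (self-similar) generating set `Y`. -/
def AbelianWreathType {X : Type u} (G : Subgroup (Equiv.Perm (List X)))
    (Y : Set (Equiv.Perm (List X))) : Prop :=
  G ≤ treeAut X ∧
  (∀ g ∈ G, ∀ h ∈ G, perm1 g * perm1 h = perm1 h * perm1 g) ∧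
  Y.Finite ∧ Subgroup.closure Y = G ∧
  (∀ g ∈ Y, ∀ x : X, secAt g [x] ∈ Y) ∧
  ∀ g ∈ Y, (∀ x : X, secAt g [x] = 1) ∨
    ((∀ x : X, secAt g [x] = g ∨ ∃ h ∈ G, secAt g [x] = embed1 (perm1 h)) ∧
      ∃! x : X, secAt g [x] = g)

/-- The setoid on `X` whose classes are the orbits of `⟨σ⟩`, i.e. the cycles (including
length-one cycles) in the complete cycle decomposition of `σ`. -/
def cycleSetoid {X : Type u} (σ : Equiv.Perm X) : Setoid X where
  r x y := ∃ n : ℤ, (σ ^ n) x = y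
  iseqv := by
    constructor
    · exact fun x => ⟨0, by simp⟩
    · rintro x y ⟨n, rfl⟩
      exact ⟨-n, by rw [← Equiv.Perm.mul_apply, ← zpow_add, neg_add_cancel, zpow_zero,
        Equiv.Perm.one_apply]⟩
    · rintro x y z ⟨n, rfl⟩ ⟨m, rfl⟩
      exact ⟨m + n, by rw [← Equiv.Perm.mul_apply, ← zpow_add]⟩

/-- The vertex set of the cycle graph of a sequence of permutations: elements of `X`
together with the cycles of the permutations. -/
def CycleVertex {X : Type u} {ι : Type v} (σ : ι → Equiv.Perm X) : Type (max u v) :=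
  X ⊕ Σ i : ι, Quotient (cycleSetoid (σ i))

/-- The cycle graph of a sequence of permutations of `X`: a bipartite graph on
`X ⊔ {cycles}`, with an edge between `x ∈ X` and a cycle whenever `x` appears in it. -/
def cycleGraph {X : Type u} {ι : Type v} (σ : ι → Equiv.Perm X) :
    SimpleGraph (CycleVertex σ) where
  Adj a b := ∃ (x : X) (p : Σ i : ι, Quotient (cycleSetoid (σ i))),
      Quotient.mk (cycleSetoid (σ p.1)) x = p.2 ∧
      ((a = Sum.inl x ∧ b = Sum.inr p) ∨ (a = Sum.inr p ∧ b = Sum.inl x))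
  symm := ⟨by
    rintro a b ⟨x, p, hx, h | h⟩ <;> exact ⟨x, p, hx, by tauto⟩⟩
  loopless := ⟨by
    rintro a ⟨x, p, hx, ⟨h1, h2⟩ | ⟨h1, h2⟩⟩ <;> simp_all⟩

/-- A sequence of permutations of `X` is tree-like if its cycle graph is a tree. -/
def TreeLike {X : Type u} {ι : Type v} (σ : ι → Equiv.Perm X) : Prop :=
  (cycleGraph σ).IsTree

/-- A kneading automata group, with distinguished generating set `Y`. -/
def Kneading {X : Type u} (G : Subgroup (Equiv.Perm (List X)))
    (Y : Set (Equiv.Perm (List X))) : Prop :=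
  G ≤ treeAut X ∧ Y.Finite ∧ Subgroup.closure Y = G ∧
  (∀ g ∈ Y, ∀ x : X, secAt g [x] ∈ Y) ∧
  (∀ h ∈ Y, h ≠ 1 → ∃! p : Equiv.Perm (List X) × X, p.1 ∈ Y ∧ secAt p.1 [p.2] = h) ∧
  (∀ h ∈ Y, ∀ x y : X, (∃ n : ℤ, ((perm1 h) ^ n) x = y) →
      secAt h [x] ≠ 1 → secAt h [y] ≠ 1 → x = y) ∧
  TreeLike (fun h : {h : Equiv.Perm (List X) // h ∈ Y ∧ h ≠ 1} => perm1 h.1)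

/-- A group is virtually abelian if it has an abelian subgroup of finite index. -/
def VirtuallyAbelian (G : Type u) [Group G] : Prop :=
  ∃ H : Subgroup G, H.FiniteIndex ∧ ∀ a b : ↥H, a * b = b * a

/-- A group is locally finite if all of its finitely generated subgroups are finite. -/
def LocallyFiniteGroup (G : Type u) [Group G] : Prop :=
  ∀ H : Subgroup G, H.FG → Finite ↥H

/-- The class of elementary amenable groups: the smallest class of groups containing all
finite groups and all abelian groups and closed under subgroups (equivalently, injective
homomorphisms), quotients (equivalently, surjective homomorphisms), group extensions and
directed unions. -/
inductive ElementaryAmenable : ∀ (G : Type u) [inst : Group G], Prop where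
  | of_finite (G : Type u) [Group G] (h : Finite G) : ElementaryAmenable G
  | of_comm (G : Type u) [Group G] (h : ∀ a b : G, a * b = b * a) : ElementaryAmenable G
  | of_injective (G H : Type u) [Group G] [Group H] (f : G →* H)
      (hf : Function.Injective f) (hH : ElementaryAmenable H) : ElementaryAmenable G
  | of_surjective (G H : Type u) [Group G] [Group H] (f : G →* H)
      (hf : Function.Surjective f) (hG : ElementaryAmenable G) : ElementaryAmenable H
  | of_extension (G : Type u) [Group G] (N : Subgroup G) [N.Normal]
      (hN : ElementaryAmenable ↥N) (hQ : ElementaryAmenable (G ⧸ N)) :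
      ElementaryAmenable G
  | of_directedUnion (G : Type u) [Group G] (ι : Type u) (H : ι → Subgroup G)
      (hdir : Directed (· ≤ ·) H) (hsup : (⨆ i, H i) = ⊤)
      (h : ∀ i, ElementaryAmenable ↥(H i)) : ElementaryAmenable G

/-- The ordinal-indexed hierarchy of elementary amenable groups: `EG₀` consists of the
groups that are finite or abelian (closed under isomorphism); `EG_{α+1}` consists of the
`EG_α`-by-`EG₀` groups together with the directed unions of `EG_α` groups; and
`EG_λ = ⋃_{β<λ} EG_β` for `λ` a limit. -/
inductive InEG : Ordinal.{u} → ∀ (G : Type u) [inst : Group G], Prop where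
  | base (G : Type u) [Group G] (h : Finite G ∨ ∀ a b : G, a * b = b * a) : InEG 0 G
  | iso (α : Ordinal.{u}) (G H : Type u) [Group G] [Group H] (e : G ≃* H)
      (h : InEG α G) : InEG α H
  | succ_ext (α : Ordinal.{u}) (G : Type u) [Group G] (N : Subgroup G) [N.Normal]
      (hN : InEG α ↥N)
      (hQ : Finite (G ⧸ N) ∨ ∀ a b : G ⧸ N, a * b = b * a) : InEG (α + 1) G
  | succ_lim (α : Ordinal.{u}) (G : Type u) [Group G] (ι : Type u) (H : ι → Subgroup G)
      (hdir : Directed (· ≤ ·) H) (hsup : (⨆ i, H i) = ⊤)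
      (h : ∀ i, InEG α ↥(H i)) : InEG (α + 1) G
  | limit (α β : Ordinal.{u}) (G : Type u) [Group G] (hα : Order.IsSuccLimit α) (hβ : β < α)
      (h : InEG β G) : InEG α G

/-- The construction rank of an elementary amenable group: the least ordinal `α` with
`G ∈ EG_α`. -/
noncomputable def egRank (G : Type u) [Group G] : Ordinal.{u} :=
  sInf {α : Ordinal.{u} | InEG α G}

/-- `M` is a normal subgroup of `H` (both viewed inside a common ambient group). -/
def NormalIn {G : Type u} [Group G] (M H : Subgroup G) : Prop :=
  M ≤ H ∧ ∀ h ∈ H, ∀ m ∈ M, h * m * h⁻¹ ∈ M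

/-- The verbal subgroup of the subgroup `H` given by the word `γ`, viewed inside the
ambient group. -/
def verbalIn {G : Type u} [Group G] {n : ℕ} (γ : FreeGroup (Fin n)) (H : Subgroup G) :
    Subgroup G :=
  Subgroup.closure {g | ∃ f : Fin n → G, (∀ i, f i ∈ H) ∧ FreeGroup.lift f γ = g}

/-!
Every first-level section of a generator in `Y` is `1` or the generator itself, and such a
generator with a (unique) active vertex is directed. Hence the first-level sections of `G`
lie in the subgroup `D` generated by the directed elements of `Y`, so `sec_G(x) = G` forces
`D = G`. Conversely, let `g ∈ Y` be active at `x₀` and let `m + 1` be the length of the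
`g`-orbit of `x₀`; the sections of `g` along this orbit are trivial except at `x₀`, so
`g ^ (m + 1)` fixes `x₀` with section `g`, and `g ^ m` carries `g x₀` back to `x₀` with
trivial section. So `x` is linked to `s x` for every generator `s`, where `x` and `y` are
linked if `k x = y` for some `k ∈ G` with `k_x = 1`; by transitivity of `G` any two letters
are linked, and conjugating `g ^ (m + 1)` by linking elements puts `g` in every `sec_G(x)`.
-/

namespace TreeAut

variable {X : Type u} {g h : Equiv.Perm (List X)}

theorem apply_nil (hg : g ∈ treeAut X) : g [] = [] := by
  have h := (hg [] (g⁻¹ [])).mp List.nil_prefix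
  rwa [Equiv.Perm.coe_inv, Equiv.apply_symm_apply, List.prefix_nil] at h

theorem length_le_length_apply (hg : g ∈ treeAut X) (a : List X) :
    a.length ≤ (g a).length := by
  induction a using List.reverseRecOn with
  | nil => simp
  | append_singleton b x ih =>
    have hpre : g b <+: g (b ++ [x]) := (hg b (b ++ [x])).mp (List.prefix_append b [x])
    have hne : g b ≠ g (b ++ [x]) := fun h => by simpa using g.injective h
    have hlt : (g b).length < (g (b ++ [x])).length :=
      hpre.length_le.lt_of_ne fun h => hne (hpre.eq_of_length h)
    simp only [List.length_append, List.length_singleton]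
    omega

theorem length_apply (hg : g ∈ treeAut X) (a : List X) : (g a).length = a.length := by
  refine le_antisymm ?_ (length_le_length_apply hg a)
  simpa using length_le_length_apply ((treeAut X).inv_mem hg) (g a)

theorem exists_apply_singleton (hg : g ∈ treeAut X) (x : X) : ∃ y, g [x] = [y] :=
  List.length_eq_one_iff.mp (length_apply hg [x])

theorem apply_append_eq (hg : g ∈ treeAut X) (w v : List X) :
    g (w ++ v) = g w ++ (g (w ++ v)).drop w.length := by
  have hp : g w <+: g (w ++ v) := (hg w (w ++ v)).mp (List.prefix_append w v)
  conv_lhs => rw [← List.take_append_drop (g w).length (g (w ++ v))]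
  rw [← List.prefix_iff_eq_take.mp hp, length_apply hg w]

theorem exists_section (hg : g ∈ treeAut X) (w : List X) :
    ∃ s : Equiv.Perm (List X), ∀ v, g (w ++ v) = g w ++ s v := by
  have hinv : ∀ v, g⁻¹ (g w ++ v) = w ++ (g⁻¹ (g w ++ v)).drop w.length := fun v => by
    simpa [length_apply hg w] using apply_append_eq ((treeAut X).inv_mem hg) (g w) v
  refine ⟨⟨fun v => (g (w ++ v)).drop w.length, fun v => (g⁻¹ (g w ++ v)).drop w.length,
    fun v => ?_, fun v => ?_⟩, apply_append_eq hg w⟩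
  · simp only
    rw [← apply_append_eq hg w v, Equiv.Perm.coe_inv, Equiv.symm_apply_apply, List.drop_left]
  · simp only
    rw [← hinv v, Equiv.Perm.coe_inv, Equiv.apply_symm_apply, ← length_apply hg w,
      List.drop_left]

theorem apply_append_secAt (hg : g ∈ treeAut X) (w v : List X) :
    g (w ++ v) = g w ++ secAt g w v := by
  have h := exists_section hg w
  rw [secAt, dif_pos h]
  exact h.choose_spec v

theorem secAt_eq_of_forall {w : List X} {s : Equiv.Perm (List X)}
    (hs : ∀ v, g (w ++ v) = g w ++ s v) : secAt g w = s := by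
  have h : ∃ s' : Equiv.Perm (List X), ∀ v, g (w ++ v) = g w ++ s' v := ⟨s, hs⟩
  rw [secAt, dif_pos h]
  exact Equiv.ext fun v => List.append_cancel_left ((h.choose_spec v).symm.trans (hs v))

theorem secAt_one (w : List X) : secAt (1 : Equiv.Perm (List X)) w = 1 :=
  secAt_eq_of_forall fun v => by simp

theorem secAt_nil (hg : g ∈ treeAut X) : secAt g [] = g :=
  secAt_eq_of_forall fun v => by rw [List.nil_append, apply_nil hg, List.nil_append]

theorem secAt_mul (hg : g ∈ treeAut X) (hh : h ∈ treeAut X) (w : List X) :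
    secAt (g * h) w = secAt g (h w) * secAt h w :=
  secAt_eq_of_forall fun v => by
    simp only [Equiv.Perm.mul_apply, apply_append_secAt hh w, apply_append_secAt hg (h w)]

theorem secAt_inv (hg : g ∈ treeAut X) (w : List X) :
    secAt g⁻¹ w = (secAt g (g⁻¹ w))⁻¹ :=
  secAt_eq_of_forall fun v => by
    have h := apply_append_secAt hg (g⁻¹ w) ((secAt g (g⁻¹ w))⁻¹ v)
    exact Equiv.Perm.inv_eq_iff_eq.mpr (by simpa using h.symm)

theorem secAt_mem_treeAut (hg : g ∈ treeAut X) (w : List X) : secAt g w ∈ treeAut X :=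
  fun a b => calc
    a <+: b ↔ w ++ a <+: w ++ b := (List.prefix_append_right_inj w).symm
    _ ↔ g (w ++ a) <+: g (w ++ b) := hg _ _
    _ ↔ g w ++ secAt g w a <+: g w ++ secAt g w b := by
      rw [apply_append_secAt hg, apply_append_secAt hg]
    _ ↔ secAt g w a <+: secAt g w b := List.prefix_append_right_inj (g w)

theorem secAt_cons (hg : g ∈ treeAut X) (x : X) (w : List X) :
    secAt g (x :: w) = secAt (secAt g [x]) w :=
  secAt_eq_of_forall fun v => by
    rw [← List.singleton_append, List.append_assoc, apply_append_secAt hg [x] (w ++ v),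
      apply_append_secAt (secAt_mem_treeAut hg [x]) w v, apply_append_secAt hg [x] w,
      List.append_assoc]

theorem secAt_pow_eq_one (hg : g ∈ treeAut X) {v : List X} {m : ℕ}
    (h : ∀ i < m, secAt g ((g ^ i) v) = 1) : secAt (g ^ m) v = 1 := by
  induction m with
  | zero => exact secAt_one v
  | succ m ih =>
    rw [pow_succ', secAt_mul hg (pow_mem hg m), h m m.lt_succ_self,
      ih fun i hi => h i (hi.trans m.lt_succ_self), mul_one]

theorem exists_pow_apply_singleton_eq [Finite X] (hg : g ∈ treeAut X) (x : X) :
    ∃ n, 0 < n ∧ (g ^ n) [x] = [x] := by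
  choose u hu using fun i : ℕ => exists_apply_singleton (pow_mem hg i) x
  obtain ⟨i, j, hij, heq⟩ := Finite.exists_ne_map_eq_of_infinite u
  wlog hlt : i < j generalizing i j
  · exact this j i hij.symm heq.symm (hij.lt_or_gt.resolve_left hlt)
  refine ⟨j - i, by omega, (g ^ i).injective ?_⟩
  rw [← Equiv.Perm.mul_apply, ← pow_add, Nat.add_sub_cancel' hlt.le, hu, hu, heq]

theorem exists_pow_succ_apply_singleton_eq [Finite X] (hg : g ∈ treeAut X) {x₀ : X}
    (h1 : ∀ y, y ≠ x₀ → secAt g [y] = 1) :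
    ∃ m : ℕ, (g ^ (m + 1)) [x₀] = [x₀] ∧ secAt (g ^ m) (g [x₀]) = 1 := by
  classical
  have hex := exists_pow_apply_singleton_eq hg x₀
  obtain ⟨hpos, hfix⟩ := Nat.find_spec hex
  obtain ⟨m, hm⟩ := Nat.exists_eq_add_of_lt hpos
  rw [zero_add] at hm
  refine ⟨m, hm ▸ hfix, secAt_pow_eq_one hg fun i hi => ?_⟩
  obtain ⟨y, hy⟩ := exists_apply_singleton (pow_mem hg (i + 1)) x₀
  have hne : y ≠ x₀ := by
    rintro rfl
    exact Nat.find_min hex (by omega) ⟨i.succ_pos, hy⟩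
  rw [← Equiv.Perm.mul_apply, ← pow_succ, hy, h1 y hne]

end TreeAut

open TreeAut

section

variable {X : Type u} {G : Subgroup (Equiv.Perm (List X))}

theorem secAt_singleton_mem_of_mem_closure {Y : Set (Equiv.Perm (List X))}
    (hY : Subgroup.closure Y ≤ treeAut X) {K : Subgroup (Equiv.Perm (List X))}
    (hK : ∀ g ∈ Y, ∀ x, secAt g [x] ∈ K) {g : Equiv.Perm (List X)}
    (hg : g ∈ Subgroup.closure Y) (x : X) : secAt g [x] ∈ K := by
  induction hg using Subgroup.closure_induction generalizing x with
  | mem g hg => exact hK g hg x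
  | one => rw [secAt_one]; exact K.one_mem
  | mul a b ha hb iha ihb =>
    obtain ⟨y, hy⟩ := exists_apply_singleton (hY hb) x
    rw [secAt_mul (hY ha) (hY hb), hy]
    exact K.mul_mem (iha y) (ihb x)
  | inv a ha iha =>
    obtain ⟨y, hy⟩ := exists_apply_singleton ((treeAut X).inv_mem (hY ha)) x
    rw [secAt_inv (hY ha), hy]
    exact K.inv_mem (iha y)

theorem selfSimilarSub_of_secAt_singleton_mem (hG : G ≤ treeAut X)
    (h : ∀ g ∈ G, ∀ x, secAt g [x] ∈ G) : SelfSimilarSub G := by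
  intro g hg w
  induction w generalizing g with
  | nil => rwa [secAt_nil (hG hg)]
  | cons x w ih => rw [secAt_cons (hG hg)]; exact ih _ (h g hg x)

def secSubgroup (hG : G ≤ treeAut X) (v : List X) : Subgroup (Equiv.Perm (List X)) where
  carrier := secImage G v
  one_mem' := ⟨1, G.one_mem, rfl, secAt_one v⟩
  mul_mem' := by
    rintro _ _ ⟨a, ha, hav, rfl⟩ ⟨b, hb, hbv, rfl⟩
    refine ⟨a * b, G.mul_mem ha hb, by rw [Equiv.Perm.mul_apply, hbv, hav], ?_⟩
    rw [secAt_mul (hG ha) (hG hb), hbv]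
  inv_mem' := by
    rintro _ ⟨a, ha, hav, rfl⟩
    have hinv : a⁻¹ v = v := Equiv.Perm.inv_eq_iff_eq.mpr hav.symm
    exact ⟨a⁻¹, G.inv_mem ha, hinv, by rw [secAt_inv (hG ha), hinv]⟩

def Linked (G : Subgroup (Equiv.Perm (List X))) (x y : X) : Prop :=
  ∃ k ∈ G, k [x] = [y] ∧ secAt k [x] = 1

theorem Linked.refl (x : X) : Linked G x x :=
  ⟨1, G.one_mem, rfl, secAt_one [x]⟩

theorem Linked.symm (hG : G ≤ treeAut X) {x y : X} (h : Linked G x y) : Linked G y x := by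
  obtain ⟨k, hk, hkx, hks⟩ := h
  have hinv : k⁻¹ [y] = [x] := Equiv.Perm.inv_eq_iff_eq.mpr hkx.symm
  exact ⟨k⁻¹, G.inv_mem hk, hinv, by rw [secAt_inv (hG hk), hinv, hks, inv_one]⟩

theorem Linked.trans (hG : G ≤ treeAut X) {x y z : X} (hxy : Linked G x y)
    (hyz : Linked G y z) : Linked G x z := by
  obtain ⟨k, hk, hkx, hks⟩ := hxy
  obtain ⟨l, hl, hly, hls⟩ := hyz
  refine ⟨l * k, G.mul_mem hl hk, by rw [Equiv.Perm.mul_apply, hkx, hly], ?_⟩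
  rw [secAt_mul (hG hl) (hG hk), hkx, hls, hks, one_mul]

theorem secImage_subset_of_linked (hG : G ≤ treeAut X) {x y : X} (h : Linked G x y) :
    secImage G [y] ⊆ secImage G [x] := by
  rintro _ ⟨a, ha, hay, rfl⟩
  obtain ⟨k', hk', hk'y, hk's⟩ := h.symm hG
  obtain ⟨k, hk, hkx, hks⟩ := h
  refine ⟨k' * a * k, G.mul_mem (G.mul_mem hk' ha) hk, ?_, ?_⟩
  · simp only [Equiv.Perm.mul_apply, hkx, hay, hk'y]
  · rw [secAt_mul (hG (G.mul_mem hk' ha)) (hG hk), secAt_mul (hG hk') (hG ha), hkx, hay,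
      hk's, hks, one_mul, mul_one]

end

section

variable {X : Type u} {G : Subgroup (Equiv.Perm (List X))} {Y : Set (Equiv.Perm (List X))}
  {g : Equiv.Perm (List X)}

theorem isDirectedAut_of_secAt_singleton {x₀ : X} (hx₀ : secAt g [x₀] = g)
    (h1 : ∀ y, y ≠ x₀ → secAt g [y] = 1) : IsDirectedAut g := by
  refine ⟨1, le_rfl, [x₀], rfl, hx₀, fun v hv hne => ?_⟩
  obtain ⟨y, rfl⟩ := List.length_eq_one_iff.mp hv
  rw [h1 y fun h => hne (h ▸ rfl)]
  exact ⟨0, fun v _ => secAt_one v⟩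

theorem IsDirectedAut.eq_one (hd : IsDirectedAut g) (hg : g ∈ treeAut X)
    (h1 : ∀ x, secAt g [x] = 1) : g = 1 := by
  obtain ⟨k, hk, w, hw, hgw, -⟩ := hd
  cases w with
  | nil => simp only [List.length_nil] at hw; omega
  | cons x w => rw [← hgw, secAt_cons hg, h1 x, secAt_one]

namespace GenBasilica

theorem subset (hGB : GenBasilica G Y) : Y ⊆ G :=
  hGB.2.2.1 ▸ Subgroup.subset_closure

theorem closure_le_treeAut (hGB : GenBasilica G Y) : Subgroup.closure Y ≤ treeAut X :=
  hGB.2.2.1 ▸ hGB.1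

theorem secAt_singleton_eq_one_or_self (hGB : GenBasilica G Y) (hg : g ∈ Y) (x : X) :
    secAt g [x] = 1 ∨ secAt g [x] = g :=
  (hGB.2.2.2 g hg).elim (fun h => Or.inl (h x)) fun h => h.1 x

theorem secAt_cases (hGB : GenBasilica G Y) (hg : g ∈ Y) :
    (∀ x, secAt g [x] = 1) ∨
      ∃ x₀, secAt g [x₀] = g ∧ ∀ y, y ≠ x₀ → secAt g [y] = 1 := by
  refine (hGB.2.2.2 g hg).imp id ?_
  rintro ⟨hsec, x₀, hx₀, huniq⟩
  exact ⟨x₀, hx₀, fun y hy => (hsec y).resolve_right (hy ∘ huniq y)⟩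

theorem selfSimilarSub (hGB : GenBasilica G Y) : SelfSimilarSub G := by
  refine selfSimilarSub_of_secAt_singleton_mem hGB.1 fun g hg x => ?_
  refine secAt_singleton_mem_of_mem_closure hGB.closure_le_treeAut (fun s hs y => ?_)
    (hGB.2.2.1 ▸ hg) x
  rcases hGB.secAt_singleton_eq_one_or_self hs y with h | h <;> rw [h]
  exacts [G.one_mem, hGB.subset hs]

theorem secAt_singleton_mem_closure_directed (hGB : GenBasilica G Y) (hg : g ∈ Y) (x : X) :
    secAt g [x] ∈ Subgroup.closure {g ∈ Y | IsDirectedAut g} := by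
  rcases hGB.secAt_cases hg with h1 | ⟨x₀, hx₀, h1⟩
  · rw [h1 x]; exact Subgroup.one_mem _
  by_cases hx : x = x₀
  · subst hx
    rw [hx₀]
    exact Subgroup.subset_closure ⟨hg, isDirectedAut_of_secAt_singleton hx₀ h1⟩
  · rw [h1 x hx]; exact Subgroup.one_mem _

theorem closure_directed_eq [Nonempty X] (hGB : GenBasilica G Y)
    (hsec : ∀ x : X, secImage G [x] = G) :
    Subgroup.closure {g ∈ Y | IsDirectedAut g} = G := by
  refine le_antisymm (hGB.2.2.1 ▸ Subgroup.closure_mono (Set.sep_subset _ _)) fun h hh => ?_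
  obtain ⟨x⟩ := ‹Nonempty X›
  obtain ⟨k, hk, -, rfl⟩ : h ∈ secImage G [x] := (hsec x).symm ▸ hh
  exact secAt_singleton_mem_of_mem_closure hGB.closure_le_treeAut
    (fun s hs => hGB.secAt_singleton_mem_closure_directed hs) (hGB.2.2.1 ▸ hk) x

theorem linked_of_apply_eq [Finite X] (hGB : GenBasilica G Y) {k : Equiv.Perm (List X)}
    (hk : k ∈ G) {x y : X} (hxy : k [x] = [y]) : Linked G x y := by
  have hY := hGB.closure_le_treeAut
  rw [← hGB.2.2.1] at hk
  induction hk using Subgroup.closure_induction generalizing x y with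
  | mem g hg =>
    rcases hGB.secAt_cases hg with h1 | ⟨x₀, hx₀, h1⟩
    · exact ⟨g, hGB.subset hg, hxy, h1 x⟩
    by_cases hx : x = x₀
    · subst hx
      obtain ⟨m, hfix, hsec⟩ := exists_pow_succ_apply_singleton_eq (hGB.1 (hGB.subset hg)) h1
      rw [hxy] at hsec
      refine Linked.symm hGB.1 ⟨g ^ m, pow_mem (hGB.subset hg) m, ?_, hsec⟩
      rw [← hxy, ← Equiv.Perm.mul_apply, ← pow_succ, hfix]
    · exact ⟨g, hGB.subset hg, hxy, h1 x hx⟩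
  | one =>
    obtain rfl : x = y := List.singleton_inj.mp hxy
    exact Linked.refl x
  | mul a b ha hb iha ihb =>
    obtain ⟨z, hz⟩ := exists_apply_singleton (hY hb) x
    refine (ihb hz).trans hGB.1 (iha ?_)
    rw [← hz, ← Equiv.Perm.mul_apply, hxy]
  | inv a ha iha => exact (iha (Equiv.Perm.inv_eq_iff_eq.mp hxy).symm).symm hGB.1

theorem mem_secImage_of_isDirectedAut [Finite X] (hGB : GenBasilica G Y)
    (htrans : ∀ x y : X, ∃ g ∈ G, g [x] = [y]) (hg : g ∈ Y) (hd : IsDirectedAut g) (x : X) :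
    g ∈ secImage G [x] := by
  have hgT := hGB.1 (hGB.subset hg)
  rcases hGB.secAt_cases hg with h1 | ⟨x₀, hx₀, h1⟩
  · rw [hd.eq_one hgT h1]
    exact (secSubgroup hGB.1 [x]).one_mem
  obtain ⟨m, hfix, hsec⟩ := exists_pow_succ_apply_singleton_eq hgT h1
  obtain ⟨k, hk, hkx⟩ := htrans x x₀
  refine secImage_subset_of_linked hGB.1 (hGB.linked_of_apply_eq hk hkx)
    ⟨g ^ (m + 1), pow_mem (hGB.subset hg) _, hfix, ?_⟩
  rw [pow_succ, secAt_mul (pow_mem hgT m) hgT, hsec, hx₀, one_mul]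

theorem secImage_eq [Finite X] (hGB : GenBasilica G Y)
    (hD : Subgroup.closure {g ∈ Y | IsDirectedAut g} = G)
    (htrans : ∀ x y : X, ∃ g ∈ G, g [x] = [y]) (x : X) : secImage G [x] = G := by
  refine subset_antisymm (fun _ ⟨k, hk, _, hks⟩ => hks ▸ hGB.selfSimilarSub k hk [x]) ?_
  have hle : Subgroup.closure {g ∈ Y | IsDirectedAut g} ≤ secSubgroup hGB.1 [x] :=
    (Subgroup.closure_le _).mpr fun g ⟨hg, hd⟩ =>
      hGB.mem_secImage_of_isDirectedAut htrans hg hd x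
  exact fun h hh => hle (hD ▸ hh)

end GenBasilica

end

/-- **Characterization of self-replication for generalized basilica groups**: a
generalized basilica group `G = ⟨Y⟩` is self-replicating if and only if `G` is generated
by the directed elements of `Y` and `G` acts transitively on `X`. -/
theorem genBasilica_selfReplicating_iff
    {X : Type u} [Finite X] [Nontrivial X]
    (G : Subgroup (Equiv.Perm (List X))) (Y : Set (Equiv.Perm (List X)))
    (hGB : GenBasilica G Y) :
    SelfReplicating G ↔
      (Subgroup.closure {g ∈ Y | IsDirectedAut g} = G ∧
        ∀ x y : X, ∃ g ∈ G, g [x] = [y]) := by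
  constructor
  · rintro ⟨-, htrans, hsec⟩
    exact ⟨hGB.closure_directed_eq hsec, htrans⟩
  · rintro ⟨hD, htrans⟩
    exact ⟨hGB.selfSimilarSub, htrans, hGB.secImage_eq hD htrans⟩
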